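/- (Gerard–Sibuya, Theorem A) Any formal power series solution φ = Σ_{|k|>0} c_k x^k ∈ ℂ[[x_1,…,x_m]]^n of a Fuchsian system x_1 ∂y/∂x_1 = f_1(x,y), …, x_m ∂y/∂x_m = f_m(x,y) converges in a neighbourhood of 0 ∈ ℂ^m. -/

import Mathlib

open MvPowerSeries

noncomputable section

/-- Formal partial derivative `∂F/∂X i` of a multivariate formal power series. -/
def pder {σ : Type*} [DecidableEq σ] (i : σ) (F : MvPowerSeries σ ℂ) : MvPowerSeries σ ℂ :=
  fun e => ((e i : ℂ) + 1) * MvPowerSeries.coeff (e + Finsupp.single i 1) F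

/-- Substitution of the family `a` into `F` (meaningful when each `a s` has zero
constant term; then only finitely many terms contribute to each coefficient). -/
def msubst {σ τ : Type*} [Fintype σ] [DecidableEq σ]
    (a : σ → MvPowerSeries τ ℂ) (F : MvPowerSeries σ ℂ) : MvPowerSeries τ ℂ :=
  fun e => ∑ d ∈ Finset.Iic (Finsupp.equivFunOnFinite.symm
      (fun _ : σ => e.sum fun _ k => k)),
    MvPowerSeries.coeff d F * MvPowerSeries.coeff e (∏ s, (a s) ^ (d s))

/-- A multivariate formal power series converges (absolutely) on some polydisc
centered at the origin, hence defines a holomorphic function near `0`. -/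
def ConvNearZero {σ : Type*} (F : MvPowerSeries σ ℂ) : Prop :=
  ∃ r : ℝ, 0 < r ∧
    Summable (fun e : σ →₀ ℕ => ‖MvPowerSeries.coeff e F‖ * r ^ (e.sum fun _ k => k))

/-- `φ ∈ ℂ[[x_1,…,x_m]]^n` is a formal power series solution of the system
`x_i^{p_i} ∂y/∂x_i = f_i(x,y)`, `i = 1,…,m`, where the right-hand sides are given by
the (vectors of) power series `F i` in the `m + n` variables `(x, y)`. -/
def IsFormalSolution {m n : ℕ} (p : Fin m → ℕ)
    (F : Fin m → Fin n → MvPowerSeries (Fin m ⊕ Fin n) ℂ)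
    (φ : Fin n → MvPowerSeries (Fin m) ℂ) : Prop :=
  ∀ i k, (MvPowerSeries.X i) ^ (p i) * pder i (φ k)
      = msubst (Sum.elim MvPowerSeries.X φ) (F i k)

/-!
Summing the equations `x_i ∂φ/∂x_i = f_i(x, φ)` over `i`, the Euler operator `∑ x_i ∂/∂x_i`
multiplies the degree-`k` coefficients of `φ` by `k`. Split `f_i = A_i y + g_i`, where `A_i y`
is the part linear in `y` alone. Once `k ≥ 2 ∑ ‖A_i‖`, the linear part is absorbed and the
degree-`k` coefficients of `φ` are bounded by `2/k` times those of a majorant of `∑ g_i(x, φ)`;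
since `φ` has no constant term, the latter only involve coefficients of `φ` of degree `< k`.

Give the monomial `x^e` the weight `t^|e|` with `t = r ε²`, where `∑_d ‖f_{i,d}‖ r^|d| < ∞`, and
induct on the truncation degree `K` to show that the weighted norm of `φ` up to degree `K` is at
most `L = r ε`. The low degrees contribute at most `L/2` because `t` carries an extra factor `ε`.
In `g_i(x, φ)`, a term `x_i` contributes `t` and a product of at least two factors from `(x, φ)`
contributes at most `L²`, so each term gains a factor `ε²`. This beats the fixed constants once
`ε` is small.
-/

open Finsupp Filter Topology
open scoped ENNReal NNReal

open Finset in
lemma ENNReal.tsum_mul_tsum_eq_tsum_sum_antidiagonal {A : Type*} [AddCommMonoid A]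
    [HasAntidiagonal A] (f g : A → ℝ≥0∞) :
    (∑' n, f n) * ∑' n, g n = ∑' n, ∑ kl ∈ antidiagonal n, f kl.1 * g kl.2 := by
  simp_rw [← ENNReal.tsum_mul_right, ← ENNReal.tsum_mul_left]
  rw [← ENNReal.tsum_prod (f := fun u v => f u * g v),
    ← HasAntidiagonal.sigmaAntidiagonalEquivProd.tsum_eq, ENNReal.tsum_sigma']
  refine tsum_congr fun n => ?_
  rw [tsum_fintype]
  exact Finset.sum_coe_sort (antidiagonal n) fun kl => f kl.1 * g kl.2

lemma ENNReal.eventually_coe_mul_lt {c δ : ℝ≥0∞} (hc : c ≠ ⊤) (hδ : δ ≠ 0) :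
    ∀ᶠ ε : ℝ≥0 in 𝓝 0, (ε : ℝ≥0∞) * c < δ := by
  have : Tendsto (fun ε : ℝ≥0 => (ε : ℝ≥0∞) * c) (𝓝 0) (𝓝 0) := by
    simpa using ENNReal.Tendsto.mul_const (ENNReal.continuous_coe.tendsto 0) (Or.inr hc)
  exact this.eventually (gt_mem_nhds (pos_iff_ne_zero.2 hδ))

namespace GerardSibuya

section WeightedNorms

variable {σ : Type*}

def weightedNorm (t : ℝ≥0) (ψ : MvPowerSeries σ ℂ) : ℝ≥0∞ :=
  ∑' e : σ →₀ ℕ, ‖coeff e ψ‖ₑ * (t : ℝ≥0∞) ^ e.degree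

def truncSum (t : ℝ≥0) (K : ℕ) (f : (σ →₀ ℕ) → ℝ≥0∞) : ℝ≥0∞ :=
  ∑' e : σ →₀ ℕ, if e.degree ≤ K then f e * (t : ℝ≥0∞) ^ e.degree else 0

def truncNorm (t : ℝ≥0) (K : ℕ) (ψ : MvPowerSeries σ ℂ) : ℝ≥0∞ :=
  truncSum t K fun e => ‖coeff e ψ‖ₑ

lemma summable_norm_coeff_mul_pow_iff (t : ℝ≥0) (ψ : MvPowerSeries σ ℂ) :
    Summable (fun e : σ →₀ ℕ => ‖coeff e ψ‖ * (t : ℝ) ^ e.degree) ↔ weightedNorm t ψ ≠ ⊤ := by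
  have hcoe : (fun e : σ →₀ ℕ => ‖coeff e ψ‖ * (t : ℝ) ^ e.degree)
      = fun e => ((‖coeff e ψ‖₊ * t ^ e.degree : ℝ≥0) : ℝ) := by
    ext; simp
  rw [hcoe, NNReal.summable_coe, ← ENNReal.tsum_coe_ne_top_iff_summable, weightedNorm]
  simp [enorm_eq_nnnorm]

lemma weightedNorm_mono {t t' : ℝ≥0} (h : t ≤ t') (ψ : MvPowerSeries σ ℂ) :
    weightedNorm t ψ ≤ weightedNorm t' ψ :=
  ENNReal.tsum_le_tsum fun _ => by gcongr

lemma _root_.ConvNearZero.eventually_weightedNorm_ne_top {ψ : MvPowerSeries σ ℂ}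
    (h : ConvNearZero ψ) :
    ∀ᶠ t in 𝓝[>] (0 : ℝ≥0), weightedNorm t ψ ≠ ⊤ := by
  obtain ⟨r, hr, hsum⟩ := h
  lift r to ℝ≥0 using hr.le
  filter_upwards [nhdsWithin_le_nhds (eventually_le_nhds (α := ℝ≥0) hr)] with t ht
  exact ne_top_of_le_ne_top ((summable_norm_coeff_mul_pow_iff r ψ).1 hsum) (weightedNorm_mono ht ψ)

lemma _root_.ConvNearZero.of_weightedNorm_ne_top {t : ℝ≥0} (ht : 0 < t) {ψ : MvPowerSeries σ ℂ}
    (h : weightedNorm t ψ ≠ ⊤) : ConvNearZero ψ :=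
  ⟨t, ht, (summable_norm_coeff_mul_pow_iff t ψ).2 h⟩

end WeightedNorms

section TruncSum

variable {σ : Type*} {t : ℝ≥0} {K : ℕ}

lemma truncSum_mono_degree {K' : ℕ} (hK : K ≤ K') (f : (σ →₀ ℕ) → ℝ≥0∞) :
    truncSum t K f ≤ truncSum t K' f :=
  ENNReal.tsum_le_tsum fun e => by split_ifs <;> first | exact le_rfl | omega | exact zero_le

lemma truncSum_mono {f g : (σ →₀ ℕ) → ℝ≥0∞} (h : ∀ e, f e ≤ g e) :
    truncSum t K f ≤ truncSum t K g :=
  ENNReal.tsum_le_tsum fun e => by split_ifs <;> gcongr; exact h e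

lemma truncSum_const_mul (c : ℝ≥0∞) (f : (σ →₀ ℕ) → ℝ≥0∞) :
    truncSum t K (fun e => c * f e) = c * truncSum t K f := by
  rw [truncSum, truncSum, ← ENNReal.tsum_mul_left]
  congr 1; ext e; split_ifs <;> simp [mul_assoc]

lemma truncSum_finsetSum {ι : Type*} (s : Finset ι) (f : ι → (σ →₀ ℕ) → ℝ≥0∞) :
    truncSum t K (fun e => ∑ i ∈ s, f i e) = ∑ i ∈ s, truncSum t K (f i) := by
  simp only [truncSum]
  rw [← Summable.tsum_finsetSum fun _ _ => ENNReal.summable]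
  congr 1; ext e; split_ifs <;> simp [Finset.sum_mul]

lemma truncSum_tsum {ι : Type*} (f : ι → (σ →₀ ℕ) → ℝ≥0∞) :
    truncSum t K (fun e => ∑' i, f i e) = ∑' i, truncSum t K (f i) := by
  simp only [truncSum]
  rw [ENNReal.tsum_comm]
  congr 1; ext e; split_ifs <;> simp [ENNReal.tsum_mul_right]

lemma truncSum_le_add_of_degree_gt {N : ℕ} {f g : (σ →₀ ℕ) → ℝ≥0∞}
    (h : ∀ e, N < e.degree → f e ≤ g e) :
    truncSum t K f ≤ truncSum t N f + truncSum t K g := by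
  rw [truncSum, truncSum, truncSum, ← ENNReal.tsum_add]
  refine ENNReal.tsum_le_tsum fun e => ?_
  split_ifs with hK hN
  · exact le_self_add
  · rw [zero_add]; gcongr; exact h e (by omega)
  · exact zero_le
  · exact zero_le

lemma truncSum_le_mul_truncSum_one (ht : t ≤ 1) {f : (σ →₀ ℕ) → ℝ≥0∞} (hf : f 0 = 0) :
    truncSum t K f ≤ t * truncSum 1 K f := by
  rw [truncSum, truncSum, ← ENNReal.tsum_mul_left]
  refine ENNReal.tsum_le_tsum fun e => ?_
  split_ifs
  · obtain rfl | he := eq_or_ne e 0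
    · simp [hf]
    have : (t : ℝ≥0∞) ^ e.degree ≤ t := by
      simpa using pow_le_pow_right_of_le_one' (ENNReal.coe_le_one_iff.2 ht)
        (Nat.one_le_iff_ne_zero.2 ((degree_eq_zero_iff e).not.2 he))
    calc f e * (t : ℝ≥0∞) ^ e.degree ≤ f e * t := by gcongr
      _ = t * (f e * (1 : ℝ≥0) ^ e.degree) := by simp [mul_comm]
  · simp

lemma truncSum_ne_top [Finite σ] {f : (σ →₀ ℕ) → ℝ≥0∞} (hf : ∀ e, f e ≠ ⊤) :
    truncSum t K f ≠ ⊤ := by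
  rw [truncSum, tsum_eq_sum (s := (finite_of_degree_le K).toFinset) fun e he => by
    rw [Set.Finite.mem_toFinset, Set.mem_ofPred_eq] at he; rw [if_neg he]]
  exact ENNReal.sum_ne_top.2 fun e _ => by
    split_ifs
    · exact ENNReal.mul_ne_top (hf e) (by simp)
    · simp

lemma weightedNorm_le_of_forall_truncNorm_le {ψ : MvPowerSeries σ ℂ} {L : ℝ≥0∞}
    (h : ∀ K, truncNorm t K ψ ≤ L) : weightedNorm t ψ ≤ L := by
  rw [weightedNorm, ENNReal.tsum_eq_iSup_sum]
  refine iSup_le fun s => le_trans ?_ (h (s.sup degree))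
  calc ∑ e ∈ s, ‖coeff e ψ‖ₑ * (t : ℝ≥0∞) ^ e.degree
      = ∑ e ∈ s, if e.degree ≤ s.sup degree then ‖coeff e ψ‖ₑ * (t : ℝ≥0∞) ^ e.degree else 0 :=
        Finset.sum_congr rfl fun e he => (if_pos (Finset.le_sup he)).symm
    _ ≤ truncNorm t (s.sup degree) ψ := ENNReal.sum_le_tsum s

end TruncSum

section TruncNorm

variable {σ : Type*} {t : ℝ≥0} {K : ℕ}

lemma truncNorm_one_le : truncNorm t K (1 : MvPowerSeries σ ℂ) ≤ 1 := by
  classical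
  rw [truncNorm, truncSum, tsum_eq_single 0 fun e he => by simp [coeff_one, he]]
  simp

lemma truncNorm_X_le (i : σ) : truncNorm t K (X i : MvPowerSeries σ ℂ) ≤ t := by
  classical
  rw [truncNorm, truncSum, tsum_eq_single (single i 1) fun e he => by simp [coeff_X, he]]
  split_ifs <;> simp

lemma le_degree_of_le_order_of_coeff_ne_zero {ψ : MvPowerSeries σ ℂ} {r : ℕ}
    (hψ : (r : ℕ∞) ≤ ψ.order) {u : σ →₀ ℕ} (hu : coeff u ψ ≠ 0) : r ≤ u.degree := by
  by_contra! h
  exact hu (coeff_of_lt_order (lt_of_lt_of_le (by exact_mod_cast h) hψ))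

open Finset in
lemma truncNorm_mul_le {ψ χ : MvPowerSeries σ ℂ} {r₁ r₂ : ℕ} (hψ : (r₁ : ℕ∞) ≤ ψ.order)
    (hχ : (r₂ : ℕ∞) ≤ χ.order) :
    truncNorm t K (ψ * χ) ≤ truncNorm t (K - r₂) ψ * truncNorm t (K - r₁) χ := by
  classical
  have key : ∀ u v : σ →₀ ℕ, (u + v).degree ≤ K →
      ‖coeff u ψ‖ₑ * ‖coeff v χ‖ₑ * (t : ℝ≥0∞) ^ (u + v).degree
        ≤ (if u.degree ≤ K - r₂ then ‖coeff u ψ‖ₑ * (t : ℝ≥0∞) ^ u.degree else 0)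
          * (if v.degree ≤ K - r₁ then ‖coeff v χ‖ₑ * (t : ℝ≥0∞) ^ v.degree else 0) := by
    intro u v huv
    by_cases hu : coeff u ψ = 0
    · simp [hu]
    by_cases hv : coeff v χ = 0
    · simp [hv]
    have h₁ := le_degree_of_le_order_of_coeff_ne_zero hψ hu
    have h₂ := le_degree_of_le_order_of_coeff_ne_zero hχ hv
    rw [map_add] at huv ⊢
    rw [if_pos (by omega), if_pos (by omega), pow_add]
    exact le_of_eq (by ring)
  rw [truncNorm, truncNorm, truncNorm, truncSum, truncSum, truncSum,
    ENNReal.tsum_mul_tsum_eq_tsum_sum_antidiagonal]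
  refine ENNReal.tsum_le_tsum fun e => ?_
  split_ifs with he
  · rw [coeff_mul]
    calc ‖∑ p ∈ antidiagonal e, coeff p.1 ψ * coeff p.2 χ‖ₑ * (t : ℝ≥0∞) ^ e.degree
        ≤ (∑ p ∈ antidiagonal e, ‖coeff p.1 ψ‖ₑ * ‖coeff p.2 χ‖ₑ) * (t : ℝ≥0∞) ^ e.degree := by
          gcongr
          exact (enorm_sum_le _ _).trans_eq (by simp [enorm_mul])
      _ ≤ _ := by
          rw [Finset.sum_mul]
          refine Finset.sum_le_sum fun p hp => ?_
          rw [HasAntidiagonal.mem_antidiagonal] at hp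
          subst hp
          exact key p.1 p.2 he
  · exact zero_le

lemma le_order_multiset_prod {R : Type*} [CommSemiring R] (s : Multiset (MvPowerSeries σ R))
    (hs : ∀ ψ ∈ s, constantCoeff ψ = 0) : (Multiset.card s : ℕ∞) ≤ s.prod.order := by
  induction s using Multiset.induction_on with
  | empty => simp
  | cons a s ih =>
    rw [Multiset.prod_cons, Multiset.card_cons, Nat.cast_add_one, add_comm]
    exact (add_le_add (one_le_order_iff_constCoeff_eq_zero.2 (hs a (Multiset.mem_cons_self a s)))
      (ih fun ψ h => hs ψ (Multiset.mem_cons_of_mem h))).trans le_order_mul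

lemma truncNorm_multiset_prod_le {B : ℝ≥0∞} (s : Multiset (MvPowerSeries σ ℂ))
    (hs : ∀ ψ ∈ s, constantCoeff ψ = 0) (hB : ∀ ψ ∈ s, truncNorm t K ψ ≤ B) :
    truncNorm t (K + Multiset.card s - 1) s.prod ≤ B ^ Multiset.card s := by
  induction s using Multiset.induction_on with
  | empty => simpa using truncNorm_one_le
  | cons a s ih =>
    have ha := Multiset.mem_cons_self a s
    have hs' : ∀ ψ ∈ s, constantCoeff ψ = 0 := fun ψ h => hs ψ (Multiset.mem_cons_of_mem h)
    rw [Multiset.prod_cons, Multiset.card_cons, pow_succ']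
    calc truncNorm t (K + (Multiset.card s + 1) - 1) (a * s.prod)
        ≤ truncNorm t (K + Multiset.card s - Multiset.card s) a
          * truncNorm t (K + Multiset.card s - 1) s.prod := by
          simpa using truncNorm_mul_le (K := K + Multiset.card s)
            (one_le_order_iff_constCoeff_eq_zero.2 (hs a ha)) (le_order_multiset_prod s hs')
      _ ≤ B * B ^ Multiset.card s := by
          gcongr
          · simpa using hB a ha
          · exact ih hs' fun ψ h => hB ψ (Multiset.mem_cons_of_mem h)

lemma truncNorm_prod_pow_le {τ : Type*} [Fintype τ] {B : ℝ≥0∞} (c : τ → MvPowerSeries σ ℂ)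
    (hc : ∀ s, constantCoeff (c s) = 0) (hB : ∀ s, truncNorm t K (c s) ≤ B) (d : τ →₀ ℕ) :
    truncNorm t (K + d.degree - 1) (∏ s, c s ^ d s) ≤ B ^ d.degree := by
  classical
  have hprod : ∏ s, c s ^ d s = (d.toMultiset.map c).prod := by
    rw [Finset.prod_multiset_map_count, toFinset_toMultiset]
    simp_rw [count_toMultiset]
    exact (Finsupp.prod_fintype d _ fun _ => pow_zero _).symm
  have hcard : Multiset.card (d.toMultiset.map c) = d.degree := by
    simp [card_toMultiset, degree_apply, Finsupp.sum]
  rw [hprod, ← hcard]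
  exact truncNorm_multiset_prod_le _ (Multiset.forall_mem_map_iff.2 fun s _ => hc s)
    (Multiset.forall_mem_map_iff.2 fun s _ => hB s)

end TruncNorm

lemma coeff_X_mul_pder {σ : Type*} [DecidableEq σ] (i : σ) (ψ : MvPowerSeries σ ℂ)
    (e : σ →₀ ℕ) : coeff e (X i * pder i ψ) = e i * coeff e ψ := by
  rw [X_def, coeff_monomial_mul, one_mul]
  split_ifs with h
  · have hi : 1 ≤ e i := by simpa using single_le_iff.1 h
    rw [coeff_apply, pder, tsub_add_cancel_of_le h, tsub_apply, single_eq_same,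
      Nat.cast_sub hi]
    ring
  · have hi : e i = 0 := by simpa [single_le_iff] using h
    simp [hi]

lemma coeff_msubst {σ τ : Type*} [Fintype σ] [DecidableEq σ] (a : σ → MvPowerSeries τ ℂ)
    (F : MvPowerSeries σ ℂ) (e : τ →₀ ℕ) :
    coeff e (msubst a F) = ∑ d ∈ Finset.Iic (equivFunOnFinite.symm fun _ => e.degree),
      coeff d F * coeff e (∏ s, a s ^ d s) := by
  rw [coeff_apply]; rfl

section FuchsianSystem

variable {m n : ℕ} {F : Fin m → Fin n → MvPowerSeries (Fin m ⊕ Fin n) ℂ}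
  {φ : Fin n → MvPowerSeries (Fin m) ℂ}

-- The monomials `y_j`. Their coefficients in `f_i` are the only terms of `f_i(x, φ)` whose
-- degree-`e` coefficient involves the coefficients of `φ` of degree `e`.
def linearMonomials (m n : ℕ) : Finset ((Fin m ⊕ Fin n) →₀ ℕ) :=
  Finset.univ.image fun j => single (Sum.inr j) 1

def linearNorm (F : Fin m → Fin n → MvPowerSeries (Fin m ⊕ Fin n) ℂ) : ℝ≥0∞ :=
  ∑ i, ∑ j, ∑ j', ‖coeff (single (Sum.inr j') 1) (F i j)‖ₑ

def nonlinearWeight (F : Fin m → Fin n → MvPowerSeries (Fin m ⊕ Fin n) ℂ) (i : Fin m) (j : Fin n)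
    (d : (Fin m ⊕ Fin n) →₀ ℕ) : ℝ≥0∞ :=
  if d ∈ linearMonomials m n then 0 else ‖coeff d (F i j)‖ₑ

def coeffENorm (φ : Fin n → MvPowerSeries (Fin m) ℂ) (e : Fin m →₀ ℕ) : ℝ≥0∞ :=
  ∑ j, ‖coeff e (φ j)‖ₑ

variable (φ) in
lemma truncNorm_le_truncSum_coeffENorm (t : ℝ≥0) (K : ℕ) (j : Fin n) :
    truncNorm t K (φ j) ≤ truncSum t K (coeffENorm φ) :=
  truncSum_mono fun e =>
    Finset.single_le_sum (f := fun j => ‖coeff e (φ j)‖ₑ) (by simp) (Finset.mem_univ j)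

lemma linearMonomials_subset_Iic {e : Fin m →₀ ℕ} (he : e ≠ 0) :
    linearMonomials m n ⊆ Finset.Iic (equivFunOnFinite.symm fun _ => e.degree) := by
  refine Finset.image_subset_iff.2 fun j _ => Finset.mem_Iic.2 (single_le_iff.2 ?_)
  simpa [Nat.one_le_iff_ne_zero] using (degree_eq_zero_iff e).not.2 he

lemma _root_.IsFormalSolution.coeff_eq_linear_add (hsol : IsFormalSolution (fun _ => 1) F φ)
    (i : Fin m) (j : Fin n) {e : Fin m →₀ ℕ} (he : e ≠ 0) :
    (e i : ℂ) * coeff e (φ j)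
      = ∑ j', coeff (single (Sum.inr j') 1) (F i j) * coeff e (φ j')
        + ∑ d ∈ Finset.Iic (equivFunOnFinite.symm fun _ => e.degree) \ linearMonomials m n,
            coeff d (F i j) * coeff e (∏ s, Sum.elim X φ s ^ d s) := by
  have h := congrArg (coeff e) (hsol i j)
  rw [pow_one, coeff_X_mul_pder, coeff_msubst] at h
  rw [h, ← Finset.sum_sdiff (linearMonomials_subset_Iic he), add_comm, linearMonomials,
    Finset.sum_image fun _ _ _ _ h => Sum.inr_injective (single_left_injective one_ne_zero h)]
  simp [single_apply, pow_ite]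

lemma _root_.IsFormalSolution.mul_enorm_coeff_le (hsol : IsFormalSolution (fun _ => 1) F φ)
    (i : Fin m) (j : Fin n) {e : Fin m →₀ ℕ} (he : e ≠ 0) :
    e i * ‖coeff e (φ j)‖ₑ
      ≤ ∑ j', ‖coeff (single (Sum.inr j') 1) (F i j)‖ₑ * ‖coeff e (φ j')‖ₑ
        + ∑' d, nonlinearWeight F i j d * ‖coeff e (∏ s, Sum.elim X φ s ^ d s)‖ₑ := by
  have h := congrArg enorm (hsol.coeff_eq_linear_add i j he)
  have hcast : ‖(e i : ℂ)‖ₑ = e i := by rw [enorm_eq_nnnorm]; simp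
  rw [enorm_mul, hcast] at h
  rw [h]
  refine (enorm_add_le _ _).trans (add_le_add ?_ ?_)
  · exact (enorm_sum_le _ _).trans_eq (by simp [enorm_mul])
  · refine (enorm_sum_le _ _).trans <| (Finset.sum_le_sum fun d hd => ?_).trans
      (ENNReal.sum_le_tsum _)
    rw [nonlinearWeight, if_neg (Finset.mem_sdiff.1 hd).2, enorm_mul]

lemma _root_.IsFormalSolution.degree_mul_coeffENorm_le
    (hsol : IsFormalSolution (fun _ => 1) F φ) {e : Fin m →₀ ℕ} (he : e ≠ 0)
    (hdeg : 2 * linearNorm F ≤ e.degree) :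
    e.degree * coeffENorm φ e
      ≤ 2 * ∑ i, ∑ j, ∑' d, nonlinearWeight F i j d * ‖coeff e (∏ s, Sum.elim X φ s ^ d s)‖ₑ := by
  set R := ∑ i, ∑ j, ∑' d, nonlinearWeight F i j d * ‖coeff e (∏ s, Sum.elim X φ s ^ d s)‖ₑ
  have hv : (e.degree : ℝ≥0∞) * coeffENorm φ e ≠ ⊤ := by
    simp [coeffENorm, ENNReal.mul_eq_top]
  -- summing over `i` turns the Euler operators `x_i ∂_i` into multiplication by the degree
  have hlin : e.degree * coeffENorm φ e ≤ linearNorm F * coeffENorm φ e + R := calc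
    e.degree * coeffENorm φ e = ∑ i, ∑ j, e i * ‖coeff e (φ j)‖ₑ := by
      simp_rw [degree_eq_sum, Nat.cast_sum, coeffENorm, Finset.sum_mul, Finset.mul_sum]
    _ ≤ ∑ i, ∑ j, (∑ j', ‖coeff (single (Sum.inr j') 1) (F i j)‖ₑ * coeffENorm φ e
          + ∑' d, nonlinearWeight F i j d * ‖coeff e (∏ s, Sum.elim X φ s ^ d s)‖ₑ) := by
      refine Finset.sum_le_sum fun i _ => Finset.sum_le_sum fun j _ =>
        (hsol.mul_enorm_coeff_le i j he).trans ?_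
      gcongr with j'
      exact Finset.single_le_sum (f := fun j => ‖coeff e (φ j)‖ₑ) (by simp) (Finset.mem_univ j')
    _ = linearNorm F * coeffENorm φ e + R := by
      simp only [Finset.sum_add_distrib, linearNorm, Finset.sum_mul, R]
  have h2 : e.degree * coeffENorm φ e + e.degree * coeffENorm φ e
      ≤ e.degree * coeffENorm φ e + 2 * R := calc
    _ = 2 * (e.degree * coeffENorm φ e) := (two_mul _).symm
    _ ≤ 2 * linearNorm F * coeffENorm φ e + 2 * R := by rw [mul_assoc, ← mul_add]; gcongr
    _ ≤ e.degree * coeffENorm φ e + 2 * R := by gcongr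
  exact ENNReal.le_of_add_le_add_left hv h2

lemma _root_.IsFormalSolution.truncSum_coeffENorm_le_add
    (hsol : IsFormalSolution (fun _ => 1) F φ) {N : ℕ} (hN : 2 * linearNorm F ≤ N)
    (t : ℝ≥0) (K : ℕ) :
    (N + 1) * truncSum t K (coeffENorm φ)
      ≤ (N + 1) * truncSum t N (coeffENorm φ)
        + 2 * ∑ i, ∑ j, ∑' d,
            nonlinearWeight F i j d * truncNorm t K (∏ s, Sum.elim X φ s ^ d s) := by
  rw [← truncSum_const_mul, ← truncSum_const_mul]
  refine (truncSum_le_add_of_degree_gt (N := N) (g := fun e => 2 * ∑ i, ∑ j, ∑' d,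
    nonlinearWeight F i j d * ‖coeff e (∏ s, Sum.elim X φ s ^ d s)‖ₑ) fun e he => ?_).trans_eq ?_
  · have he0 : e ≠ 0 := by rintro rfl; simp at he
    calc ((N : ℝ≥0∞) + 1) * coeffENorm φ e ≤ e.degree * coeffENorm φ e := by
          gcongr; exact_mod_cast he
      _ ≤ _ := hsol.degree_mul_coeffENorm_le he0 (hN.trans (by exact_mod_cast he.le))
  · simp only [truncSum_const_mul, truncSum_finsetSum, truncSum_tsum]
    rfl

lemma truncNorm_prod_pow_subst_le (hφ0 : ∀ j, constantCoeff (φ j) = 0) {r ε : ℝ≥0}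
    (hε : ε ≤ 1) {K : ℕ} (hφ : ∀ j, truncNorm (r * ε ^ 2) K (φ j) ≤ r * ε)
    {d : (Fin m ⊕ Fin n) →₀ ℕ} (hd : d ∉ linearMonomials m n) (hd0 : d ≠ 0) :
    truncNorm (r * ε ^ 2) (K + 1) (∏ s, Sum.elim X φ s ^ d s) ≤ (r : ℝ≥0∞) ^ d.degree * ε ^ 2 := by
  have hX : ∀ i, truncNorm (r * ε ^ 2) K (X i : MvPowerSeries (Fin m) ℂ) ≤ r * ε ^ 2 :=
    fun i => by exact_mod_cast truncNorm_X_le i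
  obtain hd1 | hd2 : d.degree = 1 ∨ 2 ≤ d.degree := by
    have := (degree_eq_zero_iff d).not.2 hd0; omega
  · obtain ⟨i | j, rfl⟩ : d ∈ Set.range fun s => single s 1 := range_single_one ▸ hd1
    · have hprod : ∏ s, Sum.elim X φ s ^ (single (Sum.inl i : Fin m ⊕ Fin n) 1) s = X i := by
        simp [single_apply, pow_ite]
      rw [hprod, degree_single, pow_one]
      exact_mod_cast truncNorm_X_le i
    · exact absurd (Finset.mem_image_of_mem _ (Finset.mem_univ j)) hd
  · have hB : ∀ s, truncNorm (r * ε ^ 2) K (Sum.elim X φ s) ≤ r * ε := by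
      rintro (i | j)
      · refine (hX i).trans ?_
        gcongr
        simpa [sq] using mul_le_of_le_one_left zero_le (ENNReal.coe_le_one_iff.2 hε)
      · exact hφ j
    calc truncNorm (r * ε ^ 2) (K + 1) (∏ s, Sum.elim X φ s ^ d s)
        ≤ truncNorm (r * ε ^ 2) (K + d.degree - 1) (∏ s, Sum.elim X φ s ^ d s) :=
          truncSum_mono_degree (by omega) _
      _ ≤ ((r : ℝ≥0∞) * ε) ^ d.degree :=
          truncNorm_prod_pow_le _ (by rintro (i | j) <;> simp [hφ0]) hB d
      _ ≤ (r : ℝ≥0∞) ^ d.degree * ε ^ 2 := by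
          rw [mul_pow]
          exact mul_le_mul_right (pow_le_pow_right_of_le_one' (ENNReal.coe_le_one_iff.2 hε) hd2) _

lemma sum_nonlinearWeight_mul_truncNorm_le (hF0 : ∀ i j, constantCoeff (F i j) = 0)
    (hφ0 : ∀ j, constantCoeff (φ j) = 0) {r ε : ℝ≥0} (hε : ε ≤ 1) {K : ℕ}
    (hφ : ∀ j, truncNorm (r * ε ^ 2) K (φ j) ≤ r * ε) :
    ∑ i, ∑ j, ∑' d, nonlinearWeight F i j d
        * truncNorm (r * ε ^ 2) (K + 1) (∏ s, Sum.elim X φ s ^ d s)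
      ≤ ε ^ 2 * ∑ i, ∑ j, weightedNorm r (F i j) := by
  simp only [Finset.mul_sum, weightedNorm, ← ENNReal.tsum_mul_left]
  refine Finset.sum_le_sum fun i _ => Finset.sum_le_sum fun j _ =>
    ENNReal.tsum_le_tsum fun d => ?_
  rw [nonlinearWeight]
  split_ifs with hd
  · simp
  obtain rfl | hd0 := eq_or_ne d 0
  · simp [hF0]
  calc ‖coeff d (F i j)‖ₑ * truncNorm (r * ε ^ 2) (K + 1) (∏ s, Sum.elim X φ s ^ d s)
      ≤ ‖coeff d (F i j)‖ₑ * ((r : ℝ≥0∞) ^ d.degree * ε ^ 2) := by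
        gcongr; exact truncNorm_prod_pow_subst_le hφ0 hε hφ hd hd0
    _ = ε ^ 2 * (‖coeff d (F i j)‖ₑ * (r : ℝ≥0∞) ^ d.degree) := by ring

lemma _root_.IsFormalSolution.truncSum_coeffENorm_le (hsol : IsFormalSolution (fun _ => 1) F φ)
    (hF0 : ∀ i j, constantCoeff (F i j) = 0) (hφ0 : ∀ j, constantCoeff (φ j) = 0)
    {r ε : ℝ≥0} (hr : r ≤ 1) (hε : ε ≤ 1) {N : ℕ} (hN : 2 * linearNorm F ≤ N)
    (hV : (ε : ℝ≥0∞) * (2 * truncSum 1 N (coeffENorm φ)) ≤ 1)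
    (hB : (ε : ℝ≥0∞) * (4 * ∑ i, ∑ j, weightedNorm r (F i j)) ≤ (N + 1) * r) (K : ℕ) :
    truncSum (r * ε ^ 2) K (coeffENorm φ) ≤ r * ε := by
  set B := ∑ i, ∑ j, weightedNorm r (F i j)
  have hbase : 2 * truncSum (r * ε ^ 2) N (coeffENorm φ) ≤ r * ε := calc
    _ ≤ 2 * ((r * ε ^ 2 : ℝ≥0) * truncSum 1 N (coeffENorm φ)) := by
      gcongr
      exact truncSum_le_mul_truncSum_one (mul_le_one' hr (pow_le_one₀ zero_le hε))
        (by simp [coeffENorm, hφ0])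
    _ = r * ε * (ε * (2 * truncSum 1 N (coeffENorm φ))) := by push_cast; ring
    _ ≤ r * ε := mul_le_of_le_one_right' hV
  induction K with
  | zero =>
    calc truncSum (r * ε ^ 2) 0 (coeffENorm φ) ≤ truncSum (r * ε ^ 2) N (coeffENorm φ) :=
          truncSum_mono_degree (Nat.zero_le N) _
      _ ≤ 2 * truncSum (r * ε ^ 2) N (coeffENorm φ) := by rw [two_mul]; exact le_self_add
      _ ≤ r * ε := hbase
  | succ K ih =>
    have hφ : ∀ j, truncNorm (r * ε ^ 2) K (φ j) ≤ r * ε :=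
      fun j => (truncNorm_le_truncSum_coeffENorm φ _ K j).trans ih
    refine (ENNReal.mul_le_mul_iff_right (a := 2 * ((N : ℝ≥0∞) + 1)) (by simp)
      (by finiteness)).1 ?_
    calc 2 * ((N : ℝ≥0∞) + 1) * truncSum (r * ε ^ 2) (K + 1) (coeffENorm φ)
        ≤ 2 * ((N + 1) * truncSum (r * ε ^ 2) N (coeffENorm φ) + 2 * ∑ i, ∑ j, ∑' d,
            nonlinearWeight F i j d
              * truncNorm (r * ε ^ 2) (K + 1) (∏ s, Sum.elim X φ s ^ d s)) := by
          rw [mul_assoc]; gcongr; exact hsol.truncSum_coeffENorm_le_add hN _ _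
      _ ≤ 2 * ((N + 1) * truncSum (r * ε ^ 2) N (coeffENorm φ) + 2 * (ε ^ 2 * B)) := by
          gcongr; exact sum_nonlinearWeight_mul_truncNorm_le hF0 hφ0 hε hφ
      _ = (N + 1) * (2 * truncSum (r * ε ^ 2) N (coeffENorm φ)) + ε * (ε * (4 * B)) := by ring
      _ ≤ (N + 1) * (r * ε) + ε * ((N + 1) * r) := by gcongr
      _ = 2 * ((N : ℝ≥0∞) + 1) * (r * ε) := by ring

end FuchsianSystem

end GerardSibuya

open GerardSibuya in
/-- (Gerard–Sibuya, Theorem A.) Any formal power series solution (without constant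
term) of a Fuchsian system `x_i ∂y/∂x_i = f_i(x,y)`, `i = 1,…,m`, where the `f_i` are
germs of holomorphic maps `(ℂ^{m+n},0) → (ℂ^n,0)` (encoded as convergent power series
with zero constant term), converges in a neighbourhood of `0 ∈ ℂ^m`. -/
theorem gerard_sibuya_theorem_A (m n : ℕ)
    (F : Fin m → Fin n → MvPowerSeries (Fin m ⊕ Fin n) ℂ)
    (hFconv : ∀ i k, ConvNearZero (F i k))
    (hF0 : ∀ i k, MvPowerSeries.constantCoeff (F i k) = 0)
    (φ : Fin n → MvPowerSeries (Fin m) ℂ)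
    (hφ0 : ∀ k, MvPowerSeries.constantCoeff (φ k) = 0)
    (hsol : IsFormalSolution (fun _ => 1) F φ) :
    ∀ k, ConvNearZero (φ k) := by
  obtain ⟨r, hr, hr1, hFr⟩ : ∃ r : ℝ≥0, 0 < r ∧ r ≤ 1 ∧ ∀ i k, weightedNorm r (F i k) ≠ ⊤ :=
    ((eventually_mem_nhdsWithin (s := Set.Ioi 0) (a := 0)).and <|
      ((eventually_le_nhds one_pos).filter_mono nhdsWithin_le_nhds).and <|
        eventually_all.2 fun i => eventually_all.2 fun k =>
          (hFconv i k).eventually_weightedNorm_ne_top).exists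
  obtain ⟨N, hN⟩ := ENNReal.exists_nat_gt (r := 2 * linearNorm F)
    (by simp [linearNorm, ENNReal.mul_eq_top])
  have hV : 2 * truncSum 1 N (coeffENorm φ) ≠ ⊤ :=
    ENNReal.mul_ne_top (by simp) (truncSum_ne_top fun e => by simp [coeffENorm])
  have hB : 4 * ∑ i, ∑ k, weightedNorm r (F i k) ≠ ⊤ :=
    ENNReal.mul_ne_top (by simp) (ENNReal.sum_ne_top.2 fun i _ =>
      ENNReal.sum_ne_top.2 fun k _ => hFr i k)
  obtain ⟨ε, hε, hε1, hεV, hεB⟩ : ∃ ε : ℝ≥0, 0 < ε ∧ ε ≤ 1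
      ∧ (ε : ℝ≥0∞) * (2 * truncSum 1 N (coeffENorm φ)) < 1
      ∧ (ε : ℝ≥0∞) * (4 * ∑ i, ∑ k, weightedNorm r (F i k)) < (N + 1) * r :=
    ((eventually_mem_nhdsWithin (s := Set.Ioi 0) (a := 0)).and <|
      Eventually.filter_mono nhdsWithin_le_nhds <| (eventually_le_nhds one_pos).and <|
        (ENNReal.eventually_coe_mul_lt hV one_ne_zero).and
          (ENNReal.eventually_coe_mul_lt hB (mul_ne_zero (by simp) (by simpa using hr.ne')))).exists
  intro k
  refine ConvNearZero.of_weightedNorm_ne_top (t := r * ε ^ 2) (by positivity)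
    (ne_top_of_le_ne_top (b := (r : ℝ≥0∞) * ε) (by finiteness) ?_)
  refine weightedNorm_le_of_forall_truncNorm_le fun K => ?_
  exact (truncNorm_le_truncSum_coeffENorm φ _ K k).trans
    (hsol.truncSum_coeffENorm_le hF0 hφ0 hr1 hε1 hN.le hεV.le hεB.le K)

end
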